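/- arXiv:1902.05010 — 6 statements merged into one kernel-verified Lean document; each statement's English description precedes it below -/
import Mathlib

section
/- Let ω ∈ (0, 2π) and λ ∈ ℝ. Suppose f = (f₁, f₂) : [0, ω] → ℂ² is continuously differentiable, not identically zero, and satisfies −i f₁′(θ) = λ f₁(θ) and i f₂′(θ) = λ f₂(θ) for all θ ∈ [0, ω] (i.e. −iσ₃ f′ = λ f), together with the boundary conditions f₂(0) = f₁(0) and f₂(ω) = −e^{iω} f₁(ω). Then there exists k ∈ ℤ such that λ = (2k+1)π/(2ω) − 1/2, and there exists a nonzero constant c ∈ ℂ such that f(θ) = c·(e^{iλθ}, e^{−iλθ}) for all θ ∈ [0, ω]. -/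
open Real Complex Set

lemma exp_deriv_aux (a : ℂ) (θ : ℝ) :
    HasDerivAt (fun t : ℝ => Complex.exp (a * t)) (a * Complex.exp (a * θ)) θ := by
  have h : HasDerivAt (fun t : ℝ => a * (t : ℂ)) a θ := by
    simpa using (Complex.ofRealCLM.hasDerivAt (x := θ)).const_mul a
  simpa [mul_comm] using h.cexp

lemma ode_const (a : ℂ) (f d : ℝ → ℂ) (ω : ℝ)
    (hder : ∀ θ ∈ Icc 0 ω, HasDerivWithinAt f (d θ) (Icc 0 ω) θ)
    (hode : ∀ θ ∈ Icc 0 ω, d θ = a * f θ) :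
    ∀ θ ∈ Icc 0 ω, f θ = f 0 * Complex.exp (a * θ) := by
  set g : ℝ → ℂ := fun θ => f θ * Complex.exp (-(a * θ)) with hg
  have hcont : ContinuousOn g (Icc 0 ω) := by
    apply ContinuousOn.mul
    · exact fun θ hθ => (hder θ hθ).continuousWithinAt
    · exact (Complex.continuous_exp.comp (by continuity)).continuousOn
  have hderiv : ∀ x ∈ Ico 0 ω, HasDerivWithinAt g 0 (Ici x) x := by
    intro x hx
    have hx' : x ∈ Icc 0 ω := ⟨hx.1, hx.2.le⟩
    have h1 := (hder x hx').mul ((exp_deriv_aux (-a) x).hasDerivWithinAt (s := Icc 0 ω))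
    have h2 : d x * Complex.exp (-a * x) + f x * (-a * Complex.exp (-a * x)) = 0 := by
      rw [hode x hx']; ring
    have h2' : d x * Complex.exp (-a * x) + f x * (-a * Complex.exp (-a * x)) = 0 := by
      rw [hode x hx']; ring
    have h3 : HasDerivWithinAt g 0 (Icc 0 ω) x := by
      simp only [neg_mul] at h1 h2'
      rw [hg, ← h2']
      exact h1
    exact h3.mono_of_mem_nhdsWithin (Icc_mem_nhdsGE_of_mem hx)
  have := constant_of_has_deriv_right_zero hcont hderiv
  intro θ hθ
  have h0 := this θ hθ
  simp only [hg] at h0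
  have h1 := congrArg (· * Complex.exp (a * θ)) h0
  simpa [mul_assoc, ← Complex.exp_add] using h1

/-- Any nontrivial C¹ solution of the angular eigenvalue problem
−iσ₃ f′ = λ f on [0,ω] with quantum-dot boundary conditions f₂(0) = f₁(0),
f₂(ω) = −e^{iω} f₁(ω) has λ = (2k+1)π/(2ω) − 1/2 for some k ∈ ℤ and
f(θ) = c·(e^{iλθ}, e^{−iλθ}) for a nonzero constant c. -/
theorem angular_operator_eigenvalues
    (ω : ℝ) (hω : ω ∈ Set.Ioo 0 (2 * π)) (lam : ℝ)
    (f₁ f₂ d₁ d₂ : ℝ → ℂ)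
    (hcd₁ : ContinuousOn d₁ (Set.Icc 0 ω))
    (hcd₂ : ContinuousOn d₂ (Set.Icc 0 ω))
    (hder₁ : ∀ θ ∈ Set.Icc 0 ω, HasDerivWithinAt f₁ (d₁ θ) (Set.Icc 0 ω) θ)
    (hder₂ : ∀ θ ∈ Set.Icc 0 ω, HasDerivWithinAt f₂ (d₂ θ) (Set.Icc 0 ω) θ)
    (hode₁ : ∀ θ ∈ Set.Icc 0 ω, -Complex.I * d₁ θ = (lam : ℂ) * f₁ θ)
    (hode₂ : ∀ θ ∈ Set.Icc 0 ω, Complex.I * d₂ θ = (lam : ℂ) * f₂ θ)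
    (hnontriv : ∃ θ ∈ Set.Icc 0 ω, ¬(f₁ θ = 0 ∧ f₂ θ = 0))
    (hbc0 : f₂ 0 = f₁ 0)
    (hbcω : f₂ ω = -Complex.exp (Complex.I * ω) * f₁ ω) :
    (∃ k : ℤ, lam = (2 * (k : ℝ) + 1) * π / (2 * ω) - 1 / 2) ∧
    ∃ c : ℂ, c ≠ 0 ∧ ∀ θ ∈ Set.Icc 0 ω,
      f₁ θ = c * Complex.exp (Complex.I * lam * θ) ∧
      f₂ θ = c * Complex.exp (-(Complex.I * lam * θ)) := by
  obtain ⟨hω0, hω2⟩ := hω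
  have hωIcc : ω ∈ Icc (0:ℝ) ω := ⟨hω0.le, le_refl _⟩
  have hF1 : ∀ θ ∈ Icc 0 ω, f₁ θ = f₁ 0 * Complex.exp (Complex.I * lam * θ) :=
    ode_const (Complex.I * lam) f₁ d₁ ω hder₁ (fun θ hθ => by
      linear_combination Complex.I * hode₁ θ hθ + d₁ θ * Complex.I_mul_I)
  have hF2 : ∀ θ ∈ Icc 0 ω, f₂ θ = f₂ 0 * Complex.exp (-(Complex.I * lam) * θ) :=
    ode_const (-(Complex.I * lam)) f₂ d₂ ω hder₂ (fun θ hθ => by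
      linear_combination (-Complex.I) * hode₂ θ hθ + d₂ θ * Complex.I_mul_I)
  set c := f₁ 0 with hc
  have hcne : c ≠ 0 := by
    intro h0
    obtain ⟨θ, hθ, hne⟩ := hnontriv
    apply hne
    constructor
    · rw [hF1 θ hθ, h0, zero_mul]
    · rw [hF2 θ hθ, hbc0, h0, zero_mul]
  have e1 : c * Complex.exp (-(Complex.I * lam) * ω)
      = -Complex.exp (Complex.I * ω) * (c * Complex.exp (Complex.I * lam * ω)) := by
    have h1 := hF1 ω hωIcc
    have h2 := hF2 ω hωIcc
    rw [h2, hbc0, h1] at hbcω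
    exact hbcω
  have e2 : Complex.exp (-(Complex.I * lam) * ω)
      = -Complex.exp (Complex.I * ω) * Complex.exp (Complex.I * lam * ω) := by
    apply mul_left_cancel₀ hcne
    linear_combination e1
  have key : Complex.exp ((((1 + 2 * lam) * ω + π : ℝ)) * Complex.I) = 1 := by
    have hsplit : Complex.exp ((((1 + 2 * lam) * ω + π : ℝ)) * Complex.I)
        = Complex.exp (Complex.I * ω) * (Complex.exp (Complex.I * lam * ω)
          * Complex.exp (Complex.I * lam * ω)) * Complex.exp (↑π * Complex.I) := by
      rw [← Complex.exp_add, ← Complex.exp_add, ← Complex.exp_add]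
      congr 1
      push_cast
      ring
    have hinv : Complex.exp (-(Complex.I * lam) * ω) * Complex.exp (Complex.I * lam * ω) = 1 := by
      rw [← Complex.exp_add, show -(Complex.I * (lam:ℂ)) * (ω:ℂ) + Complex.I * lam * ω = 0 by ring,
        Complex.exp_zero]
    rw [hsplit, Complex.exp_pi_mul_I]
    linear_combination (-(Complex.exp (Complex.I * lam * ω))) * e2 + hinv
  obtain ⟨n, hn⟩ := Complex.exp_eq_one_iff.mp key
  have hre : (1 + 2 * lam) * ω + π = n * (2 * π) := by
    have him := congrArg Complex.im hn
    simpa using him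
  constructor
  · refine ⟨n - 1, ?_⟩
    have hω' : (2 * ω) ≠ 0 := by positivity
    rw [eq_sub_iff_add_eq, eq_div_iff hω']
    push_cast
    linear_combination hre
  · refine ⟨c, hcne, fun θ hθ => ⟨hF1 θ hθ, ?_⟩⟩
    rw [hF2 θ hθ, hbc0,
      show -(Complex.I * (lam:ℂ)) * (θ:ℂ) = -(Complex.I * lam * θ) by ring]
end

section
/- Let α ∈ ℝ with α ≠ 0 and let ω ∈ (0, 2π) with ω ≠ π. Then there exists a unique λ ∈ (−1/2, 0) such that cos(π(λ + 1/2)) = |tanh α| · sin(|π − ω| · (λ + 1/2)). -/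
open Real

/-- For α ≠ 0 and ω ∈ (0,2π)\{π}, there is a unique λ ∈ (−1/2, 0)
with cos(π(λ+1/2)) = |tanh α| sin(|π−ω|(λ+1/2)). -/
theorem unique_lambda_zero
    (α ω : ℝ) (hα : α ≠ 0) (hω : ω ∈ Set.Ioo 0 (2 * π)) (hωπ : ω ≠ π) :
    ∃! lam : ℝ, lam ∈ Set.Ioo (-(1 / 2) : ℝ) 0 ∧
      Real.cos (π * (lam + 1 / 2)) = |Real.tanh α| * Real.sin (|π - ω| * (lam + 1 / 2)) := by
  obtain ⟨hω0, hω2⟩ := hω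
  set a := |Real.tanh α| with ha
  set b := |π - ω| with hb
  have ha0 : 0 < a := by
    rw [ha, abs_pos]
    intro h
    rw [Real.tanh_eq_sinh_div_cosh, div_eq_zero_iff] at h
    rcases h with h | h
    · exact hα (Real.sinh_eq_zero.1 h)
    · exact absurd h (ne_of_gt (Real.cosh_pos α))
  have hb0 : 0 < b := by
    rw [hb, abs_pos]
    exact sub_ne_zero.2 (Ne.symm hωπ)
  have hbπ : b < π := by
    rw [hb, abs_lt]
    constructor <;> linarith [Real.pi_pos]
  set f : ℝ → ℝ := fun t => Real.cos (π * t) - a * Real.sin (b * t) with hf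
  have hanti : StrictAntiOn f (Set.Icc (0 : ℝ) (1 / 2)) := by
    intro x hx y hy hxy
    simp only [hf]
    have hpi := Real.pi_pos
    have h1 : Real.cos (π * y) < Real.cos (π * x) := by
      apply Real.cos_lt_cos_of_nonneg_of_le_pi
      · nlinarith [hx.1]
      · nlinarith [hy.2]
      · nlinarith
    have h2 : Real.sin (b * x) < Real.sin (b * y) := by
      apply Real.strictMonoOn_sin
      · constructor <;> nlinarith [hx.1, hx.2]
      · constructor <;> nlinarith [hy.1, hy.2]
      · nlinarith
    nlinarith
  have hcont : ContinuousOn f (Set.Icc (0 : ℝ) (1 / 2)) := by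
    apply Continuous.continuousOn
    fun_prop
  have hf0 : f 0 = 1 := by simp [hf]
  have hf12 : f (1 / 2) < 0 := by
    have : Real.cos (π * (1 / 2)) = 0 := by
      rw [mul_one_div, Real.cos_pi_div_two]
    have hs : 0 < Real.sin (b * (1 / 2)) := by
      apply Real.sin_pos_of_pos_of_lt_pi <;> nlinarith
    simp only [hf, this]
    nlinarith
  have hsub : Set.Ioo (f (1 / 2)) (f 0) ⊆ f '' Set.Ioo (0 : ℝ) (1 / 2) :=
    intermediate_value_Ioo' (by norm_num) hcont
  obtain ⟨t, ht, hft⟩ := hsub (by rw [hf0]; exact ⟨hf12, one_pos⟩)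
  refine ⟨t - 1 / 2, ⟨⟨by linarith [ht.1], by linarith [ht.2]⟩, ?_⟩, ?_⟩
  · have : t - 1 / 2 + 1 / 2 = t := by ring
    rw [this]
    have := hft
    simp only [hf] at this
    linarith
  · rintro lam' ⟨⟨h1, h2⟩, heq⟩
    have hmem' : lam' + 1 / 2 ∈ Set.Icc (0 : ℝ) (1 / 2) := ⟨by linarith, by linarith⟩
    have hmem : t ∈ Set.Icc (0 : ℝ) (1 / 2) := ⟨le_of_lt ht.1, le_of_lt ht.2⟩
    have hfeq : f (lam' + 1 / 2) = f t := by
      simp only [hf]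
      rw [heq]
      simp only [hf] at hft
      linarith
    have := hanti.injOn hmem' hmem hfeq
    linarith
end

section
/- Let α ∈ ℝ with α ≠ 0 and let ω ∈ (0, 2π) with ω ≠ π. Then there exists a unique λ ∈ (−1, −1/2) such that cos(π(λ + 1/2)) = −|tanh α| · sin(|π − ω| · (λ + 1/2)). -/
open Real

lemma tanh_ne_zero_aux {α : ℝ} (hα : α ≠ 0) : Real.tanh α ≠ 0 := by
  rw [Real.tanh_eq_sinh_div_cosh]
  exact div_ne_zero (by simpa [Real.sinh_eq_zero] using hα) (ne_of_gt (Real.cosh_pos α))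

/-- For α ≠ 0 and ω ∈ (0,2π)\{π}, there is a unique λ ∈ (−1, −1/2)
with cos(π(λ+1/2)) = −|tanh α| sin(|π−ω|(λ+1/2)). -/
theorem unique_lambda_minus_one
    (α ω : ℝ) (hα : α ≠ 0) (hω : ω ∈ Set.Ioo 0 (2 * π)) (hωπ : ω ≠ π) :
    ∃! lam : ℝ, lam ∈ Set.Ioo (-1 : ℝ) (-(1 / 2)) ∧
      Real.cos (π * (lam + 1 / 2)) = -(|Real.tanh α| * Real.sin (|π - ω| * (lam + 1 / 2))) := by
  have hπ := Real.pi_pos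
  set a : ℝ := |Real.tanh α| with ha_def
  set b : ℝ := |π - ω| with hb_def
  have ha : 0 < a := abs_pos.mpr (tanh_ne_zero_aux hα)
  have hb : 0 < b := abs_pos.mpr (sub_ne_zero.mpr (Ne.symm hωπ))
  have hbπ : b < π := by
    rw [hb_def, abs_lt]
    constructor <;> [linarith [hω.2]; linarith [hω.1]]
  set f : ℝ → ℝ := fun x => Real.cos (π * (x + 1 / 2)) + a * Real.sin (b * (x + 1 / 2))
    with hf_def
  -- equation equivalent to f lam = 0
  have heq : ∀ lam : ℝ,
      (Real.cos (π * (lam + 1 / 2)) = -(a * Real.sin (b * (lam + 1 / 2)))) ↔ f lam = 0 := by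
    intro lam
    constructor <;> intro h <;> simp only [hf_def] at * <;> linarith
  -- derivative
  have hderiv : ∀ x : ℝ, HasDerivAt f
      (-Real.sin (π * (x + 1 / 2)) * π + a * (Real.cos (b * (x + 1 / 2)) * b)) x := by
    intro x
    have h1 : HasDerivAt (fun y : ℝ => π * (y + 1 / 2)) π x := by
      simpa using ((hasDerivAt_id' x).add_const (1 / 2 : ℝ)).const_mul π
    have h2 : HasDerivAt (fun y : ℝ => b * (y + 1 / 2)) b x := by
      simpa using ((hasDerivAt_id' x).add_const (1 / 2 : ℝ)).const_mul b
    have hc : HasDerivAt (fun y => Real.cos (π * (y + 1 / 2)))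
        (-Real.sin (π * (x + 1 / 2)) * π) x := (Real.hasDerivAt_cos _).comp x h1
    have hs : HasDerivAt (fun y => Real.sin (b * (y + 1 / 2)))
        (Real.cos (b * (x + 1 / 2)) * b) x := (Real.hasDerivAt_sin _).comp x h2
    exact hc.add (hs.const_mul a)
  have hcont : Continuous f := by
    have : ∀ x, HasDerivAt f _ x := hderiv
    exact (continuous_cos.comp (by continuity)).add
      (continuous_const.mul (continuous_sin.comp (by continuity)))
  -- strict monotonicity on Icc
  have hmono : StrictMonoOn f (Set.Icc (-1 : ℝ) (-(1 / 2))) := by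
    apply strictMonoOn_of_deriv_pos (convex_Icc _ _) hcont.continuousOn
    intro x hx
    rw [interior_Icc] at hx
    rw [(hderiv x).deriv]
    have hx1 : -1 < x := hx.1
    have hx2 : x < -(1 / 2) := hx.2
    have hsin : Real.sin (π * (x + 1 / 2)) < 0 := by
      apply Real.sin_neg_of_neg_of_neg_pi_lt
      · nlinarith
      · nlinarith
    have hcos : 0 ≤ Real.cos (b * (x + 1 / 2)) := by
      apply Real.cos_nonneg_of_mem_Icc
      constructor
      · nlinarith
      · nlinarith
    have : 0 < -Real.sin (π * (x + 1 / 2)) * π := by nlinarith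
    nlinarith [mul_nonneg (mul_nonneg ha.le hcos) hb.le]
  -- endpoint values
  have hfneg : f (-1) < 0 := by
    have e1 : π * ((-1 : ℝ) + 1 / 2) = -(π / 2) := by ring
    have e2 : b * ((-1 : ℝ) + 1 / 2) = -(b / 2) := by ring
    have hsin : 0 < Real.sin (b / 2) :=
      Real.sin_pos_of_pos_of_lt_pi (by linarith) (by linarith)
    simp only [hf_def, e1, e2, Real.cos_neg, Real.sin_neg, Real.cos_pi_div_two]
    nlinarith
  have hfpos : f (-(1 / 2)) > 0 := by
    have e1 : π * (-(1 / 2 : ℝ) + 1 / 2) = 0 := by ring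
    have e2 : b * (-(1 / 2 : ℝ) + 1 / 2) = 0 := by ring
    simp [hf_def, e1, e2]
  -- existence via IVT
  have hsub := intermediate_value_Ioo (by norm_num : (-1 : ℝ) ≤ -(1 / 2)) hcont.continuousOn
  have h0 : (0 : ℝ) ∈ Set.Ioo (f (-1)) (f (-(1 / 2))) := ⟨hfneg, hfpos⟩
  obtain ⟨lam, hlam, hflam⟩ := hsub h0
  refine ⟨lam, ⟨hlam, (heq lam).mpr hflam⟩, ?_⟩
  rintro y ⟨hy, hfy⟩
  have hfy0 : f y = 0 := (heq y).mp hfy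
  exact hmono.injOn (Set.mem_Icc_of_Ioo hy) (Set.mem_Icc_of_Ioo hlam) (by rw [hfy0, hflam])
end

section
/- Let n ∈ ℂ with |n| = 1 and μ ∈ (−1, 1). Define σ·n := [[0, conj(n)], [n, 0]], σ₃ := [[1,0],[0,−1]], M^±_μ := ±i(σ·n) + μσ₃, and T := −i σ₃ (σ·n). Then (1 − μ²)^{−1} M^−_μ M^+_μ = cosh(α)·I − sinh(α)·T, where α ∈ ℝ is determined by cosh(α) = (1+μ²)/(1−μ²) and sinh(α) = 2μ/(1−μ²) (equivalently, tanh(α) = 2μ/(1+μ²)). Consequently, for u₊, u₋ ∈ ℂ², the transmission condition M^+_μ u₊ + M^−_μ u₋ = 0 holds if and only if u₋ = (cosh(α)·I − sinh(α)·T) u₊. -/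
open Matrix Complex

/-- (1−μ²)⁻¹ M⁻_μ M⁺_μ = cosh(α)I − sinh(α)T where T = −iσ₃(σ·n) and
cosh α = (1+μ²)/(1−μ²), sinh α = 2μ/(1−μ²); consequently the transmission condition
M⁺_μ u₊ + M⁻_μ u₋ = 0 is equivalent to u₋ = (cosh(α)I − sinh(α)T)u₊. -/
theorem transmission_condition_rewrite
    (n : ℂ) (hn : ‖n‖ = 1) (μ : ℝ) (hμ : μ ∈ Set.Ioo (-1 : ℝ) 1)
    (α : ℝ)
    (hcosh : Real.cosh α = (1 + μ ^ 2) / (1 - μ ^ 2))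
    (hsinh : Real.sinh α = 2 * μ / (1 - μ ^ 2))
    (σn σ₃ Mp Mm T : Matrix (Fin 2) (Fin 2) ℂ)
    (hσn : σn = !![0, (starRingEnd ℂ) n; n, 0])
    (hσ₃ : σ₃ = !![1, 0; 0, -1])
    (hMp : Mp = Complex.I • σn + (μ : ℂ) • σ₃)
    (hMm : Mm = (-Complex.I) • σn + (μ : ℂ) • σ₃)
    (hT : T = (-Complex.I) • (σ₃ * σn)) :
    ((1 - (μ : ℂ) ^ 2)⁻¹ • (Mm * Mp) =
      (Real.cosh α : ℂ) • (1 : Matrix (Fin 2) (Fin 2) ℂ) - (Real.sinh α : ℂ) • T) ∧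
    (∀ up um : Fin 2 → ℂ,
      Mp.mulVec up + Mm.mulVec um = 0 ↔
      um = ((Real.cosh α : ℂ) • (1 : Matrix (Fin 2) (Fin 2) ℂ) -
            (Real.sinh α : ℂ) • T).mulVec up) := by
  obtain ⟨hμ1, hμ2⟩ := hμ
  have hμne : (1 : ℂ) - (μ : ℂ) ^ 2 ≠ 0 := by
    intro h
    have : ((1 - μ ^ 2 : ℝ) : ℂ) = 0 := by push_cast; linear_combination h
    have h' : (1 : ℝ) - μ ^ 2 = 0 := by exact_mod_cast this
    nlinarith
  have hnn : (starRingEnd ℂ) n * n = 1 := by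
    rw [Complex.conj_mul']
    simp [hn]
  have hC : ((Real.cosh α : ℂ)) = (1 + (μ:ℂ) ^ 2) / (1 - (μ:ℂ) ^ 2) := by
    rw [hcosh]; push_cast; ring
  have hS : ((Real.sinh α : ℂ)) = 2 * (μ:ℂ) / (1 - (μ:ℂ) ^ 2) := by
    rw [hsinh]; push_cast; ring
  have hMmMp : Mm * Mp = (1 + (μ:ℂ) ^ 2) • (1 : Matrix (Fin 2) (Fin 2) ℂ) - (2 * (μ:ℂ)) • T := by
    subst hσn hσ₃ hMp hMm hT
    ext i j
    fin_cases i <;> fin_cases j <;>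
      simp [Matrix.mul_apply, Fin.sum_univ_succ, Matrix.one_apply, Complex.I_mul_I, Complex.I_sq] <;>
      first
      | ring1
      | linear_combination hnn
      | linear_combination -hnn
      | linear_combination (-((starRingEnd ℂ) n * n)) * Complex.I_sq + hnn
      | linear_combination ((starRingEnd ℂ) n * n) * Complex.I_sq - hnn
      | linear_combination ((starRingEnd ℂ) n * n) * Complex.I_sq + hnn
      | linear_combination (-((starRingEnd ℂ) n * n)) * Complex.I_sq - hnn
  have hMmMm : Mm * Mm = ((μ:ℂ) ^ 2 - 1) • (1 : Matrix (Fin 2) (Fin 2) ℂ) := by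
    subst hσn hσ₃ hMp hMm hT
    ext i j
    fin_cases i <;> fin_cases j <;>
      simp [Matrix.mul_apply, Fin.sum_univ_succ, Matrix.one_apply, Complex.I_mul_I, Complex.I_sq] <;>
      first
      | ring1
      | linear_combination hnn
      | linear_combination -hnn
      | linear_combination (-((starRingEnd ℂ) n * n)) * Complex.I_sq + hnn
      | linear_combination ((starRingEnd ℂ) n * n) * Complex.I_sq - hnn
      | linear_combination ((starRingEnd ℂ) n * n) * Complex.I_sq + hnn
      | linear_combination (-((starRingEnd ℂ) n * n)) * Complex.I_sq - hnn
  have key : (1 - (μ : ℂ) ^ 2)⁻¹ • (Mm * Mp) =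
      (Real.cosh α : ℂ) • (1 : Matrix (Fin 2) (Fin 2) ℂ) - (Real.sinh α : ℂ) • T := by
    rw [hMmMp, smul_sub, smul_smul, smul_smul, hC, hS]
    congr 1 <;> congr 1 <;> field_simp <;> ring
  refine ⟨key, fun up um => ?_⟩
  constructor
  · intro h
    have e1 : (Mm * Mp) *ᵥ up + (Mm * Mm) *ᵥ um = 0 := by
      rw [← Matrix.mulVec_mulVec, ← Matrix.mulVec_mulVec, ← Matrix.mulVec_add, h,
        Matrix.mulVec_zero]
    rw [hMmMm, Matrix.smul_mulVec, Matrix.one_mulVec] at e1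
    have e2 : (Mm * Mp) *ᵥ up = (1 - (μ:ℂ)^2) • um := by
      have := e1
      linear_combination (norm := module) this
    rw [← key, Matrix.smul_mulVec, e2, smul_smul, inv_mul_cancel₀ hμne, one_smul]
  · intro h
    rw [h, ← key, Matrix.smul_mulVec]
    rw [Matrix.mulVec_smul]
    rw [Matrix.mulVec_mulVec, ← Matrix.mul_assoc, hMmMm, Matrix.smul_mul, Matrix.one_mul,
      Matrix.smul_mulVec, smul_smul]
    have hc : (1 - (μ:ℂ)^2)⁻¹ * ((μ:ℂ)^2 - 1) = -1 := by
      field_simp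
      ring
    rw [hc, neg_one_smul]
    simp
end

section
/- Let n ∈ ℂ with |n| = 1 and α ∈ ℝ. Define σ·n := [[0, conj(n)], [n, 0]], σ₃ := [[1,0],[0,−1]], and T := −iσ₃(σ·n). Let u₊, v₊ ∈ ℂ² and set u₋ := (cosh(α)·I − sinh(α)·T) u₊ and v₋ := (cosh(α)·I − sinh(α)·T) v₊. Then ⟨u₋, (σ·n) v₋⟩_{ℂ²} = ⟨u₊, (σ·n) v₊⟩_{ℂ²}. -/
open Matrix Complex

/-- If u₋ = (cosh(α)I − sinh(α)T)u₊ and v₋ = (cosh(α)I − sinh(α)T)v₊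
with T = −iσ₃(σ·n), then ⟨u₋, (σ·n)v₋⟩ = ⟨u₊, (σ·n)v₊⟩. -/
theorem delta_shell_boundary_pairing
    (n : ℂ) (hn : ‖n‖ = 1) (α : ℝ)
    (σn σ₃ T : Matrix (Fin 2) (Fin 2) ℂ)
    (hσn : σn = !![0, (starRingEnd ℂ) n; n, 0])
    (hσ₃ : σ₃ = !![1, 0; 0, -1])
    (hT : T = (-Complex.I) • (σ₃ * σn))
    (up vp um vm : Fin 2 → ℂ)
    (hum : um = ((Real.cosh α : ℂ) • (1 : Matrix (Fin 2) (Fin 2) ℂ) -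
                 (Real.sinh α : ℂ) • T).mulVec up)
    (hvm : vm = ((Real.cosh α : ℂ) • (1 : Matrix (Fin 2) (Fin 2) ℂ) -
                 (Real.sinh α : ℂ) • T).mulVec vp) :
    ∑ i : Fin 2, (starRingEnd ℂ) (um i) * (σn.mulVec vm) i =
    ∑ i : Fin 2, (starRingEnd ℂ) (up i) * (σn.mulVec vp) i := by
  have hnn : (starRingEnd ℂ) n * n = 1 := by
    rw [mul_comm, Complex.mul_conj, Complex.normSq_eq_norm_sq, hn]
    norm_num
  have hch : (Real.cosh α : ℂ)^2 - (Real.sinh α : ℂ)^2 = 1 := by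
    norm_cast
    exact Real.cosh_sq_sub_sinh_sq α
  set c : ℂ := (Real.cosh α : ℂ)
  set s : ℂ := (Real.sinh α : ℂ)
  have hM : ((c : ℂ) • (1 : Matrix (Fin 2) (Fin 2) ℂ) - s • T) =
      !![c, Complex.I * s * (starRingEnd ℂ) n; -Complex.I * s * n, c] := by
    subst hT hσ₃ hσn
    ext i j
    fin_cases i <;> fin_cases j <;>
      simp [Matrix.mul_apply, Fin.sum_univ_two, Matrix.one_apply] <;> ring
  subst hum hvm
  rw [hM, hσn]
  have hc : (starRingEnd ℂ) c = c := Complex.conj_ofReal _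
  have hs : (starRingEnd ℂ) s = s := Complex.conj_ofReal _
  simp [Matrix.mulVec, dotProduct, Fin.sum_univ_two, hc, hs, mul_comm]
  linear_combination ((starRingEnd ℂ) n * (starRingEnd ℂ) (up 0) * vp 1 +
      n * (starRingEnd ℂ) (up 1) * vp 0) * hch -
    s^2 * ((starRingEnd ℂ) n * (starRingEnd ℂ) (up 0) * vp 1 +
      n * (starRingEnd ℂ) (up 1) * vp 0) * hnn +
    (vp 0 * n^2 * s^2 * (starRingEnd ℂ) n * (starRingEnd ℂ) (up 1) +
      n * s^2 * vp 1 * (starRingEnd ℂ) n^2 * (starRingEnd ℂ) (up 0)) * Complex.I_sq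
end

section
/- Let V be a complex linear subspace of ℂ² with V ≠ {0} such that Re(z · conj(w)) = 0 for every (z, w) ∈ V. Then there exists τ ∈ [0, π) such that V is the one-dimensional subspace spanned by the vector (cos τ, i sin τ). -/
open Complex

/-- A nonzero complex subspace V ⊆ ℂ² on which Re(z·conj(w)) vanishes for
every (z,w) ∈ V is spanned by (cos τ, i sin τ) for some τ ∈ [0, π). -/
theorem lagrangian_line_parametrization
    (V : Submodule ℂ (ℂ × ℂ)) (hV : V ≠ ⊥)
    (horth : ∀ p ∈ V, (p.1 * (starRingEnd ℂ) p.2).re = 0) :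
    ∃ τ ∈ Set.Ico (0 : ℝ) Real.pi,
      V = Submodule.span ℂ {((Real.cos τ : ℂ), Complex.I * (Real.sin τ : ℂ))} := by
  obtain ⟨p, hpV, hp0⟩ := (Submodule.ne_bot_iff V).mp hV
  -- every q ∈ V is "parallel" to p
  have key : ∀ q ∈ V, p.1 * q.2 = q.1 * p.2 := by
    intro q hq
    have h1 := horth p hpV
    have h2 := horth q hq
    have h3 := horth (p + q) (V.add_mem hpV hq)
    have h4 := horth (p + I • q) (V.add_mem hpV (V.smul_mem I hq))
    simp only [Prod.fst_add, Prod.snd_add, Prod.smul_fst, Prod.smul_snd, smul_eq_mul,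
      map_add, map_mul, Complex.mul_re, Complex.add_re, Complex.add_im,
      Complex.conj_re, Complex.conj_im, Complex.mul_im, Complex.I_re, Complex.I_im] at h1 h2 h3 h4
    have hS : p.1 * (starRingEnd ℂ) p.2 + (starRingEnd ℂ) p.1 * p.2 = 0 := by
      apply Complex.ext <;>
        simp only [Complex.add_re, Complex.add_im, Complex.mul_re, Complex.mul_im,
          Complex.conj_re, Complex.conj_im, Complex.zero_re, Complex.zero_im] <;> nlinarith
    have hR : q.1 * (starRingEnd ℂ) p.2 + (starRingEnd ℂ) p.1 * q.2 = 0 := by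
      apply Complex.ext <;>
        simp only [Complex.add_re, Complex.add_im, Complex.mul_re, Complex.mul_im,
          Complex.conj_re, Complex.conj_im, Complex.zero_re, Complex.zero_im] <;> nlinarith
    by_cases hw : p.2 = 0
    · rw [hw, map_zero, mul_zero, zero_add] at hR
      rcases mul_eq_zero.mp hR with h | h
      · have : p.1 = 0 := by
          simpa using congrArg (starRingEnd ℂ) h
        rw [this, hw, zero_mul, mul_zero]
      · rw [hw, h, mul_zero, mul_zero]
    · have hw' : (starRingEnd ℂ) p.2 ≠ 0 := by simpa using hw
      apply mul_left_cancel₀ hw'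
      linear_combination q.2 * hS - p.2 * hR
  have hVp : V = Submodule.span ℂ {p} := by
    apply le_antisymm
    · intro q hq
      rw [Submodule.mem_span_singleton]
      have hd := key q hq
      by_cases h1 : p.1 = 0
      · have h2 : p.2 ≠ 0 := by
          intro h; exact hp0 (Prod.ext h1 h)
        have hq1 : q.1 = 0 := by
          have : q.1 * p.2 = 0 := by rw [← hd, h1, zero_mul]
          rcases mul_eq_zero.mp this with h | h
          · exact h
          · exact absurd h h2
        exact ⟨q.2 / p.2, Prod.ext (by simp [hq1, h1]) (by simp [div_mul_cancel₀ _ h2])⟩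
      · refine ⟨q.1 / p.1, Prod.ext (by simp [div_mul_cancel₀ _ h1]) ?_⟩
        show q.1 / p.1 * p.2 = q.2
        field_simp
        linear_combination -hd
    · rw [Submodule.span_singleton_le_iff_mem]; exact hpV
  -- parametrize the line spanned by p
  obtain ⟨τ, hτ, lam, hlam, hpv⟩ : ∃ τ ∈ Set.Ico (0 : ℝ) Real.pi, ∃ lam : ℂ, lam ≠ 0 ∧
      p = lam • (((Real.cos τ : ℝ) : ℂ), Complex.I * ((Real.sin τ : ℝ) : ℂ)) := by
    by_cases h2 : p.2 = 0
    · have h1 : p.1 ≠ 0 := by intro h; exact hp0 (Prod.ext h h2)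
      exact ⟨0, ⟨le_refl 0, Real.pi_pos⟩, p.1, h1,
        Prod.ext (by simp) (by simp [h2])⟩
    by_cases h1 : p.1 = 0
    · refine ⟨Real.pi / 2, ⟨by positivity, by linarith [Real.pi_pos]⟩, -Complex.I * p.2, ?_, ?_⟩
      · simp [h2]
      · apply Prod.ext
        · simp [h1]
        · show p.2 = -Complex.I * p.2 * (Complex.I * _)
          rw [Real.sin_pi_div_two]
          push_cast
          rw [mul_one]
          linear_combination p.2 * Complex.I_sq
    · -- both coordinates nonzero
      have him : (p.2 / (Complex.I * p.1)).im = 0 := by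
        have h0 := horth p hpV
        rw [Complex.div_im]
        simp only [Complex.mul_re, Complex.mul_im, Complex.I_re, Complex.I_im,
          Complex.mul_re, Complex.conj_re, Complex.conj_im] at h0 ⊢
        rw [div_sub_div_same]
        have : p.2.im * (0 * p.1.re - 1 * p.1.im) - p.2.re * (0 * p.1.im + 1 * p.1.re) = 0 := by
          nlinarith
        rw [this, zero_div]
      set c : ℝ := (p.2 / (Complex.I * p.1)).re with hc
      have hIp : Complex.I * p.1 ≠ 0 := mul_ne_zero Complex.I_ne_zero h1
      have hpc : p.2 = Complex.I * p.1 * (c : ℂ) := by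
        have : ((c : ℝ) : ℂ) = p.2 / (Complex.I * p.1) := Complex.ext (by simp [hc]) (by simp [him])
        rw [this, mul_div_cancel₀ _ hIp]
      have hc0 : c ≠ 0 := by
        intro h; apply h2; rw [hpc, h]; simp
      set τ : ℝ := if 0 < c then Real.arctan c else Real.arctan c + Real.pi with hτdef
      have htan : Real.tan τ = c := by
        rw [hτdef]; split
        · exact Real.tan_arctan c
        · rw [Real.tan_periodic (Real.arctan c)]; exact Real.tan_arctan c
      have hcosτ : Real.cos τ ≠ 0 := by
        rw [hτdef]; split
        · rw [Real.cos_arctan]; positivity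
        · rw [Real.cos_add_pi]
          simp only [neg_ne_zero, Real.cos_arctan]
          positivity
      have hmem : τ ∈ Set.Ico (0 : ℝ) Real.pi := by
        rw [hτdef]
        rcases lt_or_ge 0 c with h | h
        · rw [if_pos h]
          have hpos : Real.arctan 0 < Real.arctan c := Real.arctan_strictMono h
          rw [Real.arctan_zero] at hpos
          exact ⟨le_of_lt hpos, (Real.arctan_lt_pi_div_two c).trans
            (by linarith [Real.pi_pos])⟩
        · rw [if_neg (not_lt.mpr h)]
          have hneg : c < 0 := lt_of_le_of_ne h hc0
          have hlt : Real.arctan c < Real.arctan 0 := Real.arctan_strictMono hneg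
          rw [Real.arctan_zero] at hlt
          constructor
          · linarith [Real.neg_pi_div_two_lt_arctan c, Real.pi_pos]
          · linarith
      refine ⟨τ, hmem, p.1 / ((Real.cos τ : ℝ) : ℂ), ?_, ?_⟩
      · exact div_ne_zero h1 (by exact_mod_cast Complex.ofReal_ne_zero.mpr hcosτ)
      · have hcosC : ((Real.cos τ : ℝ) : ℂ) ≠ 0 := Complex.ofReal_ne_zero.mpr hcosτ
        apply Prod.ext
        · show p.1 = p.1 / _ * _
          rw [div_mul_cancel₀ _ hcosC]
        · show p.2 = p.1 / _ * (Complex.I * _)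
          rw [hpc]
          have : Real.sin τ = Real.cos τ * c := by
            have := Real.tan_eq_sin_div_cos τ
            rw [htan] at this
            field_simp at this
            linarith [this]
          rw [this, div_mul_eq_mul_div, eq_div_iff hcosC]
          push_cast
          ring
  refine ⟨τ, hτ, ?_⟩
  rw [hVp, hpv, Submodule.span_singleton_smul_eq (IsUnit.mk0 _ hlam)]
end
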